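/- arXiv:1611.02686 — 2 statements merged into one kernel-verified Lean document; each statement's English description precedes it below -/
import Mathlib

section
/- For the standard Gaussian density φ(x) = (2π)^{-p/2} e^{-‖x‖²/2} on ℝ^p, the Gaussian surface area of the sphere of radius r centered at the origin, i.e. ∫_{‖x‖=r} φ(x) dS(x) = (2π)^{-p/2} e^{-r²/2} r^{p-1} · p · π^{p/2} / Γ(p/2 + 1), is bounded above by a constant independent of the dimension p and the radius r ≥ 0. -/
/-!
Writing `s = p / 2`, the quantity equals `2^(-s) · p · r^(p-1) e^(-r²/2) / Γ(s + 1)`. The radial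
factor `r^(p-1) e^(-r²/2)` is largest at `r = √(p - 1)`, so it is at most `(p / e)^((p-1)/2)`.
On the other side, Stirling's lower bound `Γ(s + 1) ≥ √(2πs) (s / e)^s` holds at half-integers
`s = n / 2`: the duplication formula turns `Γ(s + 1) Γ(s + 1/2)` into `2^(-n) √π n!`, and the
log-convexity of `Γ` gives `Γ(s + 1/2) √s ≤ Γ(s + 1)`. Combining the two bounds leaves `√(e / π) < 1`.
-/

open Real Nat

namespace Real

theorem rpow_mul_exp_neg_le {t a : ℝ} (ht : 0 ≤ t) (ha : 0 ≤ a) :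
    t ^ a * exp (-t) ≤ (a / exp 1) ^ a := by
  rcases ha.eq_or_lt with rfl | ha
  · simpa using ht
  have hline : t / a ≤ exp (t / a - 1) := by linarith [add_one_le_exp (t / a - 1)]
  have key : (t / a) ^ a ≤ exp (t - a) := by
    calc (t / a) ^ a ≤ exp (t / a - 1) ^ a := by gcongr
      _ = exp (t - a) := by rw [← exp_mul]; congr 1; field_simp
  rw [div_rpow ht ha.le, div_le_iff₀ (by positivity)] at key
  rw [div_rpow ha.le (exp_pos 1).le, exp_one_rpow, le_div_iff₀ (exp_pos a)]
  calc t ^ a * exp (-t) * exp a = t ^ a * exp (a - t) := by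
        rw [mul_assoc, ← exp_add]; ring_nf
    _ ≤ exp (t - a) * a ^ a * exp (a - t) := by gcongr
    _ = a ^ a := by rw [mul_comm, ← mul_assoc, ← exp_add]; simp

theorem pow_mul_exp_neg_sq_div_two_le {x : ℝ} (hx : 0 ≤ x) (n : ℕ) :
    x ^ n * exp (-x ^ 2 / 2) ≤ (n / exp 1) ^ ((n : ℝ) / 2) := by
  have h := rpow_mul_exp_neg_le (t := x ^ 2 / 2) (a := n / 2) (by positivity) (by positivity)
  have hpow : x ^ n = (2 : ℝ) ^ ((n : ℝ) / 2) * (x ^ 2 / 2) ^ ((n : ℝ) / 2) := by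
    rw [← mul_rpow (by norm_num) (by positivity), mul_div_cancel₀ _ two_ne_zero,
      ← rpow_natCast, ← rpow_natCast, ← rpow_mul hx]
    norm_num [mul_div_cancel₀]
  have hrhs : (n / exp 1) ^ ((n : ℝ) / 2)
      = (2 : ℝ) ^ ((n : ℝ) / 2) * ((n / 2) / exp 1) ^ ((n : ℝ) / 2) := by
    rw [← mul_rpow (by norm_num) (by positivity)]; congr 1; field_simp
  rw [hpow, hrhs, mul_assoc, neg_div]
  gcongr

theorem pow_pred_mul_exp_neg_sq_div_two_le {x : ℝ} (hx : 0 ≤ x) {p : ℕ} (hp : 1 ≤ p) :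
    x ^ (p - 1) * exp (-x ^ 2 / 2) ≤ (p / exp 1) ^ (((p : ℝ) - 1) / 2) := by
  have hp1 : (0 : ℝ) ≤ p - 1 := by rw [sub_nonneg]; exact_mod_cast hp
  calc x ^ (p - 1) * exp (-x ^ 2 / 2) ≤ (((p - 1 : ℕ) : ℝ) / exp 1) ^ (((p - 1 : ℕ) : ℝ) / 2) :=
        pow_mul_exp_neg_sq_div_two_le hx _
    _ ≤ (p / exp 1) ^ (((p : ℝ) - 1) / 2) := by
        rw [Nat.cast_sub hp, Nat.cast_one]
        exact rpow_le_rpow (div_nonneg hp1 (exp_pos 1).le) (by gcongr; linarith) (by linarith)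

theorem Gamma_add_half_mul_sqrt_le {a : ℝ} (ha : 0 < a) :
    Gamma (a + 1 / 2) * √a ≤ Gamma (a + 1) := by
  have hconv := Gamma_mul_add_mul_le_rpow_Gamma_mul_rpow_Gamma (s := a) (t := a + 1)
    ha (by linarith) one_half_pos one_half_pos (by norm_num)
  rw [← sqrt_eq_rpow, ← sqrt_eq_rpow, show 1 / 2 * a + 1 / 2 * (a + 1) = a + 1 / 2 by ring]
    at hconv
  calc Gamma (a + 1 / 2) * √a ≤ √(Gamma a) * √(Gamma (a + 1)) * √a := by gcongr
    _ = √(Gamma (a + 1)) * √(a * Gamma a) := by rw [sqrt_mul ha.le]; ring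
    _ = Gamma (a + 1) := by
        rw [← Gamma_add_one ha.ne', mul_self_sqrt (Gamma_pos_of_pos (by linarith)).le]

theorem le_Gamma_half_nat_add_one_stirling (n : ℕ) :
    √(2 * π * (n / 2)) * ((n / 2) / exp 1) ^ ((n : ℝ) / 2) ≤ Gamma (n / 2 + 1) := by
  rcases Nat.eq_zero_or_pos n with rfl | hn
  · simp
  set s : ℝ := n / 2 with hs_def
  have hs : 0 < s := by positivity
  have hn_eq : (n : ℝ) = 2 * s := by rw [hs_def]; ring
  have hduplication : Gamma (s + 1) * Gamma (s + 1 / 2) = √π * (2 : ℝ) ^ (-(n : ℝ)) * n ! := by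
    rw [Gamma_add_one hs.ne', mul_assoc, Gamma_mul_Gamma_add_half, ← Gamma_nat_eq_factorial,
      hn_eq, Gamma_add_one (by positivity), show 1 - 2 * s = 1 + -(2 * s) by ring,
      rpow_add two_pos, rpow_one]
    ring
  have hsq : (√(2 * π * s) * (s / exp 1) ^ s) ^ 2
      = √s * (√π * (2 : ℝ) ^ (-(n : ℝ)) * (√(2 * π * n) * (n / exp 1) ^ n)) := by
    have hpow : ((s / exp 1) ^ s) ^ 2 = (s / exp 1) ^ n := by
      rw [← rpow_natCast _ 2, ← rpow_mul (by positivity), ← rpow_natCast, hn_eq]; ring_nf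
    have hroots : √s * √π * √(2 * π * n) = 2 * π * s := by
      rw [← sqrt_mul hs.le, ← sqrt_mul (by positivity), hn_eq,
        show s * π * (2 * π * (2 * s)) = (2 * π * s) ^ 2 by ring, sqrt_sq (by positivity)]
    have htwo : (2 : ℝ) ^ (-(n : ℝ)) * (n / exp 1) ^ n = (s / exp 1) ^ n := by
      rw [rpow_neg zero_le_two, rpow_natCast, ← inv_pow, ← mul_pow, hn_eq]; field_simp
    calc (√(2 * π * s) * (s / exp 1) ^ s) ^ 2 = (2 * π * s) * ((s / exp 1) ^ s) ^ 2 := by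
          rw [mul_pow, sq_sqrt (by positivity)]
      _ = _ := by rw [hpow, ← hroots, ← htwo]; ring
  refine le_of_pow_le_pow_left₀ two_ne_zero (Gamma_pos_of_pos (by linarith)).le ?_
  calc (√(2 * π * s) * (s / exp 1) ^ s) ^ 2
      = √s * (√π * (2 : ℝ) ^ (-(n : ℝ)) * (√(2 * π * n) * (n / exp 1) ^ n)) := hsq
    _ ≤ √s * (√π * (2 : ℝ) ^ (-(n : ℝ)) * n !) := by
        gcongr; exact Stirling.le_factorial_stirling n
    _ = Gamma (s + 1) * (Gamma (s + 1 / 2) * √s) := by rw [← hduplication]; ring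
    _ ≤ Gamma (s + 1) ^ 2 := by rw [sq]; gcongr; exact Gamma_add_half_mul_sqrt_le hs

end Real

/-- The Gaussian surface area of the centered sphere of radius `r` in `ℝ^p`,
`(2π)^{-p/2} e^{-r²/2} r^{p-1} · p · π^{p/2} / Γ(p/2 + 1)`, is bounded above by a
constant independent of `p ≥ 1` and `r ≥ 0`. -/
theorem stmt5 :
    ∃ C : ℝ, 0 < C ∧ ∀ (p : ℕ), 1 ≤ p → ∀ r : ℝ, 0 ≤ r →
      (2 * π) ^ (-(p : ℝ) / 2) * Real.exp (-r ^ 2 / 2) * r ^ (p - 1) * p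
          * π ^ ((p : ℝ) / 2) / Real.Gamma ((p : ℝ) / 2 + 1) ≤ C := by
  refine ⟨1, one_pos, fun p hp r hr => ?_⟩
  have hp0 : (0 : ℝ) < p := by exact_mod_cast hp
  set X := ((p : ℝ) / exp 1) ^ ((p : ℝ) / 2)
  set Y := (2 : ℝ) ^ (-(p : ℝ) / 2)
  have hradial : r ^ (p - 1) * exp (-r ^ 2 / 2) ≤ X / √(p / exp 1) := by
    rw [sqrt_eq_rpow, ← rpow_sub (by positivity), ← sub_div]
    exact pow_pred_mul_exp_neg_sq_div_two_le hr hp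
  have hstirling : √(π * p) * X * Y ≤ Gamma (p / 2 + 1) := by
    convert le_Gamma_half_nat_add_one_stirling p using 1
    rw [div_div, mul_comm 2 (exp 1), ← div_div, div_rpow (by positivity) zero_le_two,
      show 2 * π * (p / 2) = π * p by ring]
    simp only [Y, X, neg_div, rpow_neg zero_le_two]
    ring
  have hnormalization : (2 * π) ^ (-(p : ℝ) / 2) * π ^ ((p : ℝ) / 2) = Y := by
    rw [mul_rpow zero_le_two pi_pos.le, mul_assoc, ← rpow_add pi_pos, neg_div, neg_add_cancel,
      rpow_zero, mul_one]
    simp only [Y, neg_div]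
  have hconstant : p / √(p / exp 1) ≤ √(π * p) := by
    rw [div_le_iff₀ (by positivity), ← sqrt_mul (by positivity), le_sqrt hp0.le (by positivity),
      ← mul_div_assoc, le_div_iff₀ (exp_pos 1)]
    nlinarith [mul_pos hp0 hp0, exp_one_lt_d9, pi_gt_three]
  rw [div_le_one (Gamma_pos_of_pos (by positivity))]
  calc (2 * π) ^ (-(p : ℝ) / 2) * exp (-r ^ 2 / 2) * r ^ (p - 1) * p * π ^ ((p : ℝ) / 2)
      = Y * p * (r ^ (p - 1) * exp (-r ^ 2 / 2)) := by rw [← hnormalization]; ring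
    _ ≤ Y * p * (X / √(p / exp 1)) := by gcongr
    _ = p / √(p / exp 1) * X * Y := by ring
    _ ≤ √(π * p) * X * Y := by gcongr
    _ ≤ Gamma (p / 2 + 1) := hstirling
end

section
/- Coverage bound from survival-function approximation and anti-concentration: Let T be a real random variable with continuous distribution whose survival function satisfies |P(T > t) − G(t)| ≤ Δ for all t, where G is the (conditional) survival function of a bootstrap statistic with upper quantile Q(α) = inf{t : G(t) ≤ α}, and suppose P(t < T ≤ t + ε) ≤ Δ + cε for all t, ε > 0. Then for all α ∈ (0,1): |P(T > Q(α)) − α| ≤ 2Δ (in the continuous case, where quantile crossing errors vanish). -/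
/-!
Write `F t = P(T > t)` and `q = Q α`. Since `G` is antitone, `G t ≤ α` for `t > q` and
`G t > α` for `t < q`, so `|F - G| ≤ Δ` gives `F ≤ α + Δ` to the right of `q` and
`F ≥ α - Δ` to its left. As `T` has no atoms, `F = 1 - cdf` is continuous, and letting
`t → q` from both sides yields `|F q - α| ≤ Δ ≤ 2Δ`. The limits of `G` at `±∞` make the
set defining `q` nonempty and bounded below.
-/

open MeasureTheory ProbabilityTheory Filter Topology Set

lemma ProbabilityTheory.continuousAt_cdf_of_measure_singleton {μ : Measure ℝ}
    [IsProbabilityMeasure μ] {x : ℝ} (hx : μ {x} = 0) : ContinuousAt (cdf μ) x := by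
  rw [(cdf μ).mono.continuousAt_iff_leftLim_eq_rightLim, StieltjesFunction.rightLim_eq]
  have hjump := (cdf μ).measure_singleton x
  rw [measure_cdf, hx, eq_comm, ENNReal.ofReal_eq_zero, sub_nonpos] at hjump
  exact le_antisymm ((cdf μ).mono.leftLim_le le_rfl) hjump

section Survival

variable {Ω : Type*} [MeasurableSpace Ω] {μ : Measure Ω} [IsProbabilityMeasure μ]
  {X : Ω → ℝ}

lemma measureReal_lt_eq_one_sub_cdf (hX : Measurable X) (t : ℝ) :
    μ.real {ω | t < X ω} = 1 - cdf (μ.map X) t := by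
  have : IsProbabilityMeasure (μ.map X) := Measure.isProbabilityMeasure_map hX.aemeasurable
  rw [cdf_eq_real, ← probReal_compl_eq_one_sub measurableSet_Iic, compl_Iic,
    map_measureReal_apply hX measurableSet_Ioi]
  rfl

lemma antitone_measureReal_lt (hX : Measurable X) :
    Antitone fun t => μ.real {ω | t < X ω} := by
  intro s t hst
  simp only [measureReal_lt_eq_one_sub_cdf hX]
  exact sub_le_sub_left ((cdf _).mono hst) 1

lemma tendsto_measureReal_lt_atTop (hX : Measurable X) :
    Tendsto (fun t => μ.real {ω | t < X ω}) atTop (𝓝 0) := by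
  simp only [measureReal_lt_eq_one_sub_cdf hX]
  simpa using (tendsto_cdf_atTop (μ.map X)).const_sub 1

lemma tendsto_measureReal_lt_atBot (hX : Measurable X) :
    Tendsto (fun t => μ.real {ω | t < X ω}) atBot (𝓝 1) := by
  simp only [measureReal_lt_eq_one_sub_cdf hX]
  simpa using (tendsto_cdf_atBot (μ.map X)).const_sub 1

lemma continuousAt_measureReal_lt (hX : Measurable X) {t : ℝ} (ht : μ {ω | X ω = t} = 0) :
    ContinuousAt (fun s => μ.real {ω | s < X ω}) t := by
  have : IsProbabilityMeasure (μ.map X) := Measure.isProbabilityMeasure_map hX.aemeasurable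
  simp only [measureReal_lt_eq_one_sub_cdf hX]
  refine continuousAt_const.sub (continuousAt_cdf_of_measure_singleton ?_)
  rwa [Measure.map_apply hX (measurableSet_singleton t)]

end Survival

section Quantile

variable {G : ℝ → ℝ} {α : ℝ}

lemma nonempty_setOf_le_of_tendsto_atTop (hG : Tendsto G atTop (𝓝 0)) (hα : 0 < α) :
    {s | G s ≤ α}.Nonempty :=
  (hG.eventually (ge_mem_nhds hα)).exists

lemma bddBelow_setOf_le_of_tendsto_atBot (hG : Tendsto G atBot (𝓝 1)) (hα : α < 1) :
    BddBelow {s | G s ≤ α} := by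
  obtain ⟨b, -, hb⟩ := atBot_basis.eventually_iff.1 (hG.eventually (lt_mem_nhds hα))
  refine ⟨b, fun s hs => ?_⟩
  by_contra! h
  exact (hb h.le).not_ge hs

lemma Antitone.le_of_csInf_lt (hG : Antitone G) {t : ℝ} (hne : {s | G s ≤ α}.Nonempty)
    (ht : sInf {s | G s ≤ α} < t) : G t ≤ α := by
  obtain ⟨s, hs, hst⟩ := exists_lt_of_csInf_lt hne ht
  exact (hG hst.le).trans hs

lemma abs_sub_le_of_continuousAt_csInf {F : ℝ → ℝ} {Δ : ℝ} (hFG : ∀ t, |F t - G t| ≤ Δ)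
    (hG : Antitone G) (hne : {s | G s ≤ α}.Nonempty) (hbdd : BddBelow {s | G s ≤ α})
    (hF : ContinuousAt F (sInf {s | G s ≤ α})) :
    |F (sInf {s | G s ≤ α}) - α| ≤ Δ := by
  set q := sInf {s | G s ≤ α}
  have upper : F q ≤ α + Δ := by
    refine le_of_tendsto (hF.tendsto.mono_left nhdsWithin_le_nhds : Tendsto F (𝓝[>] q) _) ?_
    filter_upwards [self_mem_nhdsWithin] with t ht
    linarith [(abs_sub_le_iff.1 (hFG t)).1, hG.le_of_csInf_lt hne ht]
  have lower : α - Δ ≤ F q := by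
    refine ge_of_tendsto (hF.tendsto.mono_left nhdsWithin_le_nhds : Tendsto F (𝓝[<] q) _) ?_
    filter_upwards [self_mem_nhdsWithin] with t ht
    have hGt : α < G t := not_le.1 (notMem_of_lt_csInf (s := {s | G s ≤ α}) ht hbdd)
    linarith [(abs_sub_le_iff.1 (hFG t)).2]
  exact abs_sub_le_iff.2 ⟨by linarith, by linarith⟩

end Quantile

theorem stmt16_general
    {Ω Ω' : Type*} [MeasurableSpace Ω] [MeasurableSpace Ω']
    {μ : Measure Ω} {ν : Measure Ω'}
    [IsProbabilityMeasure μ] [IsProbabilityMeasure ν]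
    (T : Ω → ℝ) (T' : Ω' → ℝ) (hT : Measurable T) (hT' : Measurable T')
    (hTcont : ∀ t : ℝ, μ {ω | T ω = t} = 0)
    (G : ℝ → ℝ) (hG : G = fun t => (ν {ω | T' ω > t}).toReal)
    (Δ : ℝ)
    (hFG : ∀ t, |(μ {ω | T ω > t}).toReal - G t| ≤ Δ)
    (Q : ℝ → ℝ) (hQ : Q = fun α => sInf {t | G t ≤ α})
    (α : ℝ) (hα : α ∈ Set.Ioo (0 : ℝ) 1) :
    |(μ {ω | T ω > Q α}).toReal - α| ≤ 2 * Δ := by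
  have hΔ : 0 ≤ Δ := (abs_nonneg _).trans (hFG 0)
  subst hG hQ
  have hcoverage := abs_sub_le_of_continuousAt_csInf hFG (antitone_measureReal_lt hT')
    (nonempty_setOf_le_of_tendsto_atTop (tendsto_measureReal_lt_atTop hT') hα.1)
    (bddBelow_setOf_le_of_tendsto_atBot (tendsto_measureReal_lt_atBot hT') hα.2)
    (continuousAt_measureReal_lt hT (hTcont _))
  exact hcoverage.trans (by linarith)

/-- Coverage bound: let `T` be a real random variable with continuous
distribution whose survival function is within `Δ` of the survival function `G` of a
bootstrap statistic `T′`, with upper quantile `Q(α) = inf{t : G t ≤ α}`, and assume the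
anti-concentration bound `P(t < T ≤ t + ε) ≤ Δ + cε`. Then
`|P(T > Q(α)) − α| ≤ 2Δ` for all `α ∈ (0,1)`. -/
theorem stmt16
    {Ω Ω' : Type*} [MeasurableSpace Ω] [MeasurableSpace Ω']
    {μ : Measure Ω} {ν : Measure Ω'}
    [IsProbabilityMeasure μ] [IsProbabilityMeasure ν]
    (T : Ω → ℝ) (T' : Ω' → ℝ) (hT : Measurable T) (hT' : Measurable T')
    (hTcont : ∀ t : ℝ, μ {ω | T ω = t} = 0)
    (G : ℝ → ℝ) (hG : G = fun t => (ν {ω | T' ω > t}).toReal)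
    (Δ c : ℝ) (hΔ : 0 ≤ Δ) (hc : 0 < c)
    (hFG : ∀ t, |(μ {ω | T ω > t}).toReal - G t| ≤ Δ)
    (hanti : ∀ t ε : ℝ, 0 < ε →
      (μ {ω | t < T ω ∧ T ω ≤ t + ε}).toReal ≤ Δ + c * ε)
    (Q : ℝ → ℝ) (hQ : Q = fun α => sInf {t | G t ≤ α})
    (α : ℝ) (hα : α ∈ Set.Ioo (0 : ℝ) 1) :
    |(μ {ω | T ω > Q α}).toReal - α| ≤ 2 * Δ :=
  stmt16_general T T' hT hT' hTcont G hG Δ hFG Q hQ α hα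
end
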